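/- In the system mZ_n, the formula (A ∧ ¬A) ⇒ ¬B is derivable (negative ex falso quodlibet, NEFQ). -/
import Mathlib


inductive Fm where
  | var : Nat → Fm
  | bot : Fm
  | top : Fm
  | neg : Fm → Fm
  | and : Fm → Fm → Fm
  | or  : Fm → Fm → Fm
  | imp : Fm → Fm → Fm
deriving DecidableEq

open Fm

/-- Axioms (1)-(8) of positive intuitionistic propositional calculus IPC⁺. -/
def PosAx (f : Fm) : Prop := ∃ A B C,
  f = imp A (imp B A) ∨
  f = imp (imp A B) (imp (imp A (imp B C)) (imp A C)) ∨
  f = imp A (imp B (Fm.and A B)) ∨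
  f = imp (Fm.and A B) A ∨
  f = imp (Fm.and A B) B ∨
  f = imp A (Fm.or A B) ∨
  f = imp B (Fm.or A B) ∨
  f = imp (imp A C) (imp (imp B C) (imp (Fm.or A B) C))

/-- Axiom (9b): contraposition. -/
def Ax9b (f : Fm) : Prop := ∃ A B, f = imp (imp A B) (imp (neg B) (neg A))

/-- Axiom (10b)': 1 ⇒ ¬0. -/
def Ax10b' (f : Fm) : Prop := f = imp Fm.top (neg Fm.bot)

/-- Axiom (11b): A ⇒ 1 and 0 ⇒ A. -/
def Ax11b (f : Fm) : Prop := ∃ A, f = imp A Fm.top ∨ f = imp Fm.bot A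

/-- Axiom (12b): (¬A ∧ ¬B) ⇒ ¬(A ∨ B). -/
def Ax12b (f : Fm) : Prop := ∃ A B, f = imp (Fm.and (neg A) (neg B)) (neg (Fm.or A B))

/-- Axiom (13b): ¬(A ∧ B) ⇒ (¬A ∨ ¬B). -/
def Ax13b (f : Fm) : Prop := ∃ A B, f = imp (neg (Fm.and A B)) (Fm.or (neg A) (neg B))

/-- Axioms of the system mZ_n. -/
def MZAx (f : Fm) : Prop := PosAx f ∨ Ax9b f ∨ Ax10b' f ∨ Ax11b f ∨ Ax12b f

/-- Axioms of the system mCZ_n. -/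
def MCZAx (f : Fm) : Prop := MZAx f ∨ Ax13b f

/-- Hilbert-style derivability from hypotheses H with axiom set Ax; Modus Ponens only rule. -/
inductive Deriv (Ax : Fm → Prop) (H : Set Fm) : Fm → Prop
  | ax  {f : Fm} : Ax f → Deriv Ax H f
  | hyp {f : Fm} : f ∈ H → Deriv Ax H f
  | mp  {A B : Fm} : Deriv Ax H (imp A B) → Deriv Ax H A → Deriv Ax H B

/-- A° = ¬(A ∧ ¬A). -/
def circ (A : Fm) : Fm := neg (Fm.and A (neg A))

/-- Aⁿ : n-fold application of °, A⁰ = A. -/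
def pow (A : Fm) : Nat → Fm
  | 0 => A
  | n + 1 => circ (pow A n)

/-- A^{(n)} = A¹ ∧ A² ∧ … ∧ Aⁿ (for n ≥ 1; conventionally ⊤ for n = 0). -/
def conN (A : Fm) : Nat → Fm
  | 0 => Fm.top
  | 1 => pow A 1
  | n + 2 => Fm.and (conN A (n + 1)) (pow A (n + 2))

namespace MZHelp

lemma dax1 (A B : Fm) : Deriv MZAx ∅ (imp A (imp B A)) :=
  .ax (Or.inl ⟨A, B, A, Or.inl rfl⟩)

lemma dax2 (A B C : Fm) :
    Deriv MZAx ∅ (imp (imp A B) (imp (imp A (imp B C)) (imp A C))) :=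
  .ax (Or.inl ⟨A, B, C, Or.inr (Or.inl rfl)⟩)

lemma dax3 (A B : Fm) : Deriv MZAx ∅ (imp A (imp B (Fm.and A B))) :=
  .ax (Or.inl ⟨A, B, A, Or.inr (Or.inr (Or.inl rfl))⟩)

lemma dax4 (A B : Fm) : Deriv MZAx ∅ (imp (Fm.and A B) A) :=
  .ax (Or.inl ⟨A, B, A, Or.inr (Or.inr (Or.inr (Or.inl rfl)))⟩)

lemma dax5 (A B : Fm) : Deriv MZAx ∅ (imp (Fm.and A B) B) :=
  .ax (Or.inl ⟨A, B, A, Or.inr (Or.inr (Or.inr (Or.inr (Or.inl rfl))))⟩)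

lemma dax9b (A B : Fm) : Deriv MZAx ∅ (imp (imp A B) (imp (neg B) (neg A))) :=
  .ax (Or.inr (Or.inl ⟨A, B, rfl⟩))

/-- MP under an implication. -/
lemma dmp {C X Y : Fm} (h1 : Deriv MZAx ∅ (imp C (imp X Y)))
    (h2 : Deriv MZAx ∅ (imp C X)) : Deriv MZAx ∅ (imp C Y) :=
  .mp (.mp (dax2 C X Y) h2) h1

lemma dlift {X : Fm} (C : Fm) (h : Deriv MZAx ∅ X) : Deriv MZAx ∅ (imp C X) :=
  .mp (dax1 X C) h

lemma dcomp {C X Y : Fm} (h1 : Deriv MZAx ∅ (imp C X))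
    (h2 : Deriv MZAx ∅ (imp X Y)) : Deriv MZAx ∅ (imp C Y) :=
  dmp (dlift C h2) h1

end MZHelp

open MZHelp in
theorem stmt4 (A B : Fm) :
    Deriv MZAx ∅ (imp (Fm.and A (neg A)) (neg B)) := by
  set C := Fm.and A (neg A) with hC
  -- C ⇒ ¬(A∧B)
  have h4 : Deriv MZAx ∅ (imp C (neg (Fm.and A B))) :=
    dcomp (dax5 A (neg A)) (.mp (dax9b (Fm.and A B) A) (dax4 A B))
  -- C ⇒ (¬(A∧B) ⇒ ¬B)
  have h8 : Deriv MZAx ∅ (imp C (imp (neg (Fm.and A B)) (neg B))) :=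
    dcomp (dcomp (dax4 A (neg A)) (dax3 A B)) (dax9b B (Fm.and A B))
  exact dmp h8 h4
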